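/- Let f: R → S be a surjective ring homomorphism such that the only idempotent of R lying in Ker(f) is 0. Then R is GSWNC if and only if S is GSWNC and Ker(f) is a nil ideal. -/

import Mathlib

/-!
An element `a` is strongly nil-clean (`a = q + e` with `q` nilpotent, `e` idempotent, `qe = eq`)
exactly when `a - a²` is nilpotent: the idempotent `1 - (1 - aⁿ)ⁿ` is a polynomial in `a` that
agrees with `a` modulo `a - a²`. Hence `a` is SWNC iff `a - a²` or `a + a²` is nilpotent, a
criterion that passes along `f` in both directions once `Ker f` is nil; since units also lift
modulo a nil ideal, `S` GSWNC gives `R` GSWNC. Conversely, if `R` is GSWNC and `f x = 0`, write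
`x = q ± e`; then `f e = ∓ f q` is a nilpotent idempotent, so `f e = 0`, hence `e = 0` and
`x = q`.
-/

open Polynomial

/-- An element is strongly weakly nil-clean. -/
def IsSWNC {R : Type*} [Ring R] (a : R) : Prop :=
  ∃ q e : R, IsNilpotent q ∧ IsIdempotentElem e ∧ Commute q e ∧ (a = q + e ∨ a = q - e)

/-- A ring is GSWNC if every non-unit is strongly weakly nil-clean. -/
def IsGSWNC (R : Type*) [Ring R] : Prop :=
  ∀ a : R, ¬ IsUnit a → IsSWNC a

def IsStronglyNilClean {R : Type*} [Ring R] (a : R) : Prop :=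
  ∃ q e : R, IsNilpotent q ∧ IsIdempotentElem e ∧ Commute q e ∧ a = q + e

lemma X_sub_X_sq_dvd_X_sub_one_sub_one_sub_X_pow_pow {n : ℕ} (hn : n ≠ 0) :
    (X - X ^ 2 : ℤ[X]) ∣ X - (1 - (1 - X ^ n) ^ n) := by
  have hX : (X : ℤ[X]) ∣ 1 - (1 - X ^ n) ^ n := by
    have h := sub_dvd_pow_sub_pow (1 : ℤ[X]) (1 - X ^ n) n
    rw [sub_sub_cancel, one_pow] at h
    exact (dvd_pow_self X hn).trans h
  have hX' : (1 - X : ℤ[X]) ∣ (1 - X ^ n) ^ n := by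
    have h := sub_dvd_pow_sub_pow (1 : ℤ[X]) X n
    rw [one_pow] at h
    exact h.trans (dvd_pow_self _ hn)
  have hsplit : (X : ℤ[X]) - (1 - (1 - X ^ n) ^ n)
      = X * (1 - X ^ n) ^ n - (1 - (1 - X ^ n) ^ n) * (1 - X) := by ring
  rw [hsplit, show (X - X ^ 2 : ℤ[X]) = X * (1 - X) by ring]
  exact dvd_sub (mul_dvd_mul_left X hX') (mul_dvd_mul_right hX (1 - X))

section Ring

variable {R S : Type*} [Ring R] [Ring S]

lemma commute_aeval (a : R) (p q : ℤ[X]) : Commute (aeval a p) (aeval a q) :=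
  (Commute.all p q).map (aeval a)

lemma isNilpotent_aeval_of_X_sub_X_sq_dvd {a : R} (ha : IsNilpotent (a - a ^ 2)) {p : ℤ[X]}
    (hp : X - X ^ 2 ∣ p) : IsNilpotent (aeval a p) := by
  obtain ⟨q, rfl⟩ := hp
  have h := (commute_aeval a (X - X ^ 2) q).isNilpotent_mul_right (by simpa using ha)
  rwa [← map_mul] at h

theorem exists_isIdempotentElem_commute_isNilpotent_sub {a : R}
    (ha : IsNilpotent (a - a ^ 2)) :
    ∃ e : R, IsIdempotentElem e ∧ Commute a e ∧ IsNilpotent (a - e) := by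
  obtain ⟨n, hn⟩ := ha
  have hn' : (a - a ^ 2) ^ (n + 1) = 0 := by rw [pow_succ, hn, zero_mul]
  have haeval : aeval a (1 - (1 - X ^ (n + 1)) ^ (n + 1) : ℤ[X])
      = 1 - (1 - a ^ (n + 1)) ^ (n + 1) := by
    simp
  refine ⟨_, isIdempotentElem_one_sub_one_sub_pow_pow a (n + 1) hn', ?_, ?_⟩
  · rw [← haeval]
    simpa only [aeval_X] using commute_aeval a X _
  · rw [← haeval]
    simpa only [map_sub, aeval_X] using isNilpotent_aeval_of_X_sub_X_sq_dvd ⟨n, hn⟩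
      (X_sub_X_sq_dvd_X_sub_one_sub_one_sub_X_pow_pow n.succ_ne_zero)

theorem isStronglyNilClean_iff_isNilpotent_sub_sq {a : R} :
    IsStronglyNilClean a ↔ IsNilpotent (a - a ^ 2) := by
  constructor
  · rintro ⟨q, e, hq, he, hqe, rfl⟩
    have h : q + e - (q + e) ^ 2 = q * (1 - q - 2 * e) := by
      rw [sq, add_mul, mul_add, mul_add, ← hqe.eq, he.eq]
      noncomm_ring
    have hc : Commute q (1 - q - 2 * e) :=
      ((Commute.one_right q).sub_right (Commute.refl q)).sub_right
        ((Commute.ofNat_right q 2).mul_right hqe)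
    exact h ▸ hc.isNilpotent_mul_right hq
  · intro ha
    obtain ⟨e, he, hae, hnil⟩ := exists_isIdempotentElem_commute_isNilpotent_sub ha
    exact ⟨a - e, e, hnil, he, hae.sub_left (Commute.refl e), (sub_add_cancel a e).symm⟩

theorem isSWNC_iff_isStronglyNilClean_or_neg {a : R} :
    IsSWNC a ↔ IsStronglyNilClean a ∨ IsStronglyNilClean (-a) := by
  constructor
  · rintro ⟨q, e, hq, he, hqe, rfl | rfl⟩
    · exact Or.inl ⟨q, e, hq, he, hqe, rfl⟩
    · exact Or.inr ⟨-q, e, hq.neg, he, hqe.neg_left, by abel⟩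
  · rintro (⟨q, e, hq, he, hqe, rfl⟩ | ⟨q, e, hq, he, hqe, h⟩)
    · exact ⟨q, e, hq, he, hqe, Or.inl rfl⟩
    · exact ⟨-q, e, hq.neg, he, hqe.neg_left, Or.inr (by rw [← neg_neg a, h]; abel)⟩

theorem isSWNC_iff_isNilpotent {a : R} :
    IsSWNC a ↔ IsNilpotent (a - a ^ 2) ∨ IsNilpotent (a + a ^ 2) := by
  rw [isSWNC_iff_isStronglyNilClean_or_neg, isStronglyNilClean_iff_isNilpotent_sub_sq,
    isStronglyNilClean_iff_isNilpotent_sub_sq, neg_sq, ← neg_add', isNilpotent_neg_iff]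

lemma IsSWNC.map (f : R →+* S) {a : R} (h : IsSWNC a) : IsSWNC (f a) := by
  rw [isSWNC_iff_isNilpotent] at h ⊢
  exact h.imp (fun h ↦ by simpa using h.map f) (fun h ↦ by simpa using h.map f)

lemma isUnit_of_isUnit_mul_of_isUnit_mul {M : Type*} [Monoid M] {a b : M}
    (hab : IsUnit (a * b)) (hba : IsUnit (b * a)) : IsUnit a := by
  obtain ⟨c, hc⟩ := hab.exists_right_inv
  obtain ⟨d, hd⟩ := hba.exists_left_inv
  have hdc : d * b = b * c :=
    left_inv_eq_right_inv (by rw [mul_assoc, hd]) (by rw [← mul_assoc, hc])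
  exact isUnit_iff_exists.mpr ⟨b * c, by rw [← mul_assoc, hc], by rw [← hdc, mul_assoc, hd]⟩

section NilKernel

variable (f : R →+* S) (hker : ∀ x : R, f x = 0 → IsNilpotent x)
include hker

lemma isNilpotent_of_isNilpotent_map {x : R} (h : IsNilpotent (f x)) : IsNilpotent x := by
  obtain ⟨m, hm⟩ := h
  obtain ⟨k, hk⟩ := hker (x ^ m) (by rw [map_pow, hm])
  exact ⟨m * k, by rw [pow_mul, hk]⟩

lemma IsSWNC.of_map {a : R} (h : IsSWNC (f a)) : IsSWNC a := by
  rw [isSWNC_iff_isNilpotent] at h ⊢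
  exact h.imp (fun h ↦ isNilpotent_of_isNilpotent_map f hker (by simpa using h))
    (fun h ↦ isNilpotent_of_isNilpotent_map f hker (by simpa using h))

lemma isUnit_of_isUnit_map (hf : Function.Surjective f) {a : R} (h : IsUnit (f a)) :
    IsUnit a := by
  obtain ⟨b, hb⟩ := hf ↑h.unit⁻¹
  have hunit : ∀ x : R, f x = 1 → IsUnit x := fun x hx ↦ by
    simpa using (hker (x - 1) (by rw [map_sub, hx, map_one, sub_self])).isUnit_add_one
  exact isUnit_of_isUnit_mul_of_isUnit_mul (hunit (a * b) (by simp [hb]))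
    (hunit (b * a) (by simp [hb]))

lemma IsGSWNC.of_surjective_of_isNilpotent_ker (hf : Function.Surjective f) (hS : IsGSWNC S) :
    IsGSWNC R := fun a ha ↦
  IsSWNC.of_map f hker (hS (f a) (mt (isUnit_of_isUnit_map f hker hf) ha))

end NilKernel

lemma IsGSWNC.of_surjective (f : R →+* S) (hf : Function.Surjective f) (hR : IsGSWNC R) :
    IsGSWNC S := by
  intro b hb
  obtain ⟨a, rfl⟩ := hf b
  exact (hR a (mt (IsUnit.map f) hb)).map f

section IdempotentFreeKernel

variable (f : R →+* S) (hidem : ∀ e : R, IsIdempotentElem e → f e = 0 → e = 0)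
include hidem

lemma IsSWNC.isNilpotent_of_map_eq_zero {x : R} (h : IsSWNC x) (hx : f x = 0) :
    IsNilpotent x := by
  obtain ⟨q, e, hq, he, -, hxqe⟩ := h
  have hfe : IsNilpotent (f e) := by
    rcases hxqe with rfl | rfl
    · simpa [eq_neg_of_add_eq_zero_right (by simpa using hx)] using (hq.map f).neg
    · simpa [(sub_eq_zero.mp (by simpa using hx)).symm] using hq.map f
  have he0 : e = 0 := hidem e he ((he.map f).eq_zero_of_isNilpotent hfe)
  rcases hxqe with rfl | rfl <;> simpa [he0] using hq

lemma IsGSWNC.isNilpotent_of_map_eq_zero (hR : IsGSWNC R) {x : R} (hx : f x = 0) :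
    IsNilpotent x := by
  by_cases hu : IsUnit x
  · have h01 : (0 : S) = 1 := isUnit_zero_iff.mp (hx ▸ hu.map f)
    have h10 : (1 : R) = 0 := hidem 1 .one (by rw [map_one, h01])
    exact ⟨1, by rw [pow_one, ← mul_one x, h10, mul_zero]⟩
  · exact (hR x hu).isNilpotent_of_map_eq_zero f hidem hx

end IdempotentFreeKernel

end Ring

theorem stmt17 {R S : Type*} [Ring R] [Ring S] (f : R →+* S) (hf : Function.Surjective f)
    (hker : ∀ e : R, IsIdempotentElem e → f e = 0 → e = 0) :
    IsGSWNC R ↔ (IsGSWNC S ∧ ∀ x : R, f x = 0 → IsNilpotent x) :=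
  ⟨fun hR ↦ ⟨hR.of_surjective f hf, fun _ ↦ hR.isNilpotent_of_map_eq_zero f hker⟩,
    fun ⟨hS, hnil⟩ ↦ hS.of_surjective_of_isNilpotent_ker f hnil hf⟩
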